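/- Let $0 < t < \tfrac12 < s < 1$ with $s + t < 1$, and let $K$ be the attractor of the Mendivil–Taylor IFS on $\mathbb{R}^2$ given by $\varphi_1(x,y) = (tx, sy)$, $\varphi_2(x,y) = (sx, ty + (1-t))$, $\varphi_3(x,y) = (sx + (1-s), ty)$, $\varphi_4(x,y) = (tx + (1-t), sy + (1-s))$. Then $\pi_W(K) = \pi_W([0,1]^2)$ for every one-dimensional linear subspace $W$ of $\mathbb{R}^2$ if and only if $\frac{1 - \sqrt{2s-1}}{2} \le t$. -/

import Mathlib

open Set Module

/-- The point `(a, b)` of the Euclidean plane. -/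
noncomputable def mk2 (a b : ℝ) : EuclideanSpace ℝ (Fin 2) := WithLp.toLp 2 ![a, b]

/-- Orthogonal projection onto a subspace, viewed as a map of the ambient space. -/
noncomputable def orthProj (W : Submodule ℝ (EuclideanSpace ℝ (Fin 2)))
    (x : EuclideanSpace ℝ (Fin 2)) : EuclideanSpace ℝ (Fin 2) :=
  (W.orthogonalProjection x : EuclideanSpace ℝ (Fin 2))

/-- The unit square `[0,1]²`. -/
def unitSq : Set (EuclideanSpace ℝ (Fin 2)) := {p | ∀ i, p i ∈ Icc (0 : ℝ) 1}

/-! The `(a, b)`-shadow `{a x + b y | (x, y) ∈ K}` determines the projection of `K` to the line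
spanned by `(a, b)`. Applying the four maps, the shadow of `K` is the union of translates of its
`(a t, b s)`- and `(a s, b t)`-shadows. When `(1 - 2t)² ≤ 2s - 1`, the same translates of the
shadows of the square cover the shadow of the square, for every `(a, b)`; iterating `n` times puts
every point of the square's shadow within `(|a| + |b|) sⁿ` of the closed shadow of `K`. When
`(1 - 2t)² > 2s - 1`, the four translates leave a gap in a direction `(r, -1)`, and as
`K ⊆ [0,1]²` the shadow of `K` misses it. -/

local notation "ℝ²" => EuclideanSpace ℝ (Fin 2)

@[simp] lemma mk2_apply_zero (a b : ℝ) : mk2 a b 0 = a := by simp [mk2]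

@[simp] lemma mk2_apply_one (a b : ℝ) : mk2 a b 1 = b := by simp [mk2]

lemma mk2_ne_zero_of_right {a b : ℝ} (hb : b ≠ 0) : mk2 a b ≠ 0 :=
  fun h => hb (by simpa using congrArg (· 1) h)

lemma mk2_mem_unitSq {x y : ℝ} : mk2 x y ∈ unitSq ↔ x ∈ Icc 0 1 ∧ y ∈ Icc 0 1 := by
  simp [unitSq, Fin.forall_fin_two]

lemma convex_unitSq : Convex ℝ unitSq := fun _ hp _ hq _ _ hα hβ hαβ i => by
  simpa using convex_Icc (0 : ℝ) 1 (hp i) (hq i) hα hβ hαβ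

def shadow (A : Set ℝ²) (a b : ℝ) : Set ℝ := (fun p => a * p 0 + b * p 1) '' A

lemma IsCompact.shadow {A : Set ℝ²} (hA : IsCompact A) (a b : ℝ) : IsCompact (shadow A a b) :=
  hA.image (by fun_prop)

def unitSqShadow (a b : ℝ) : Set ℝ := Icc (min a 0 + min b 0) (max a 0 + max b 0)

lemma mul_mem_Icc_min_max {a x : ℝ} (hx : x ∈ Icc (0 : ℝ) 1) : a * x ∈ Icc (min a 0) (max a 0) := by
  obtain ⟨hx0, hx1⟩ := hx
  rcases le_total a 0 with ha | ha
  · rw [min_eq_left ha, max_eq_right ha]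
    constructor <;> nlinarith
  · rw [min_eq_right ha, max_eq_left ha]
    constructor <;> nlinarith

lemma exists_mul_eq_min_and_exists_mul_eq_max (a : ℝ) :
    (∃ x ∈ Icc (0 : ℝ) 1, a * x = min a 0) ∧ ∃ x ∈ Icc (0 : ℝ) 1, a * x = max a 0 := by
  rcases le_total a 0 with ha | ha
  · exact ⟨⟨1, by simp, by simp [ha]⟩, ⟨0, by simp, by simp [ha]⟩⟩
  · exact ⟨⟨0, by simp, by simp [ha]⟩, ⟨1, by simp, by simp [ha]⟩⟩

lemma shadow_unitSq (a b : ℝ) : shadow unitSq a b = unitSqShadow a b := by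
  refine subset_antisymm ?_ ?_
  · rintro _ ⟨p, hp, rfl⟩
    obtain ⟨h0, h0'⟩ := mul_mem_Icc_min_max (a := a) (hp 0)
    obtain ⟨h1, h1'⟩ := mul_mem_Icc_min_max (a := b) (hp 1)
    exact ⟨add_le_add h0 h1, add_le_add h0' h1'⟩
  · obtain ⟨⟨x, hx, hxa⟩, ⟨x', hx', hxa'⟩⟩ := exists_mul_eq_min_and_exists_mul_eq_max a
    obtain ⟨⟨y, hy, hyb⟩, ⟨y', hy', hyb'⟩⟩ := exists_mul_eq_min_and_exists_mul_eq_max b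
    refine (convex_unitSq.isPreconnected.image _ (by fun_prop)).Icc_subset ?_ ?_
    · exact ⟨mk2 x y, mk2_mem_unitSq.2 ⟨hx, hy⟩, by simp [hxa, hyb]⟩
    · exact ⟨mk2 x' y', mk2_mem_unitSq.2 ⟨hx', hy'⟩, by simp [hxa', hyb']⟩

lemma shadow_subset_unitSqShadow {A : Set ℝ²} (hA : A ⊆ unitSq) (a b : ℝ) :
    shadow A a b ⊆ unitSqShadow a b :=
  shadow_unitSq a b ▸ image_mono hA

lemma unitSqShadow_of_nonneg_of_nonneg {a b : ℝ} (ha : 0 ≤ a) (hb : 0 ≤ b) :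
    unitSqShadow a b = Icc 0 (a + b) := by
  simp [unitSqShadow, ha, hb]

lemma unitSqShadow_of_nonneg_of_nonpos {a b : ℝ} (ha : 0 ≤ a) (hb : b ≤ 0) :
    unitSqShadow a b = Icc b a := by
  simp [unitSqShadow, ha, hb]

lemma neg_mem_unitSqShadow_neg {a b c : ℝ} :
    -c ∈ unitSqShadow (-a) (-b) ↔ c ∈ unitSqShadow a b := by
  have hmin (x : ℝ) : min (-x) 0 = -max x 0 := by rw [← neg_zero, min_neg_neg, neg_zero]
  have hmax (x : ℝ) : max (-x) 0 = -min x 0 := by rw [← neg_zero, max_neg_neg, neg_zero]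
  simp only [unitSqShadow, mem_Icc, hmin, hmax]
  constructor <;> rintro ⟨h, h'⟩ <;> constructor <;> linarith

lemma dist_le_of_mem_unitSqShadow {a b x y : ℝ} (hx : x ∈ unitSqShadow a b)
    (hy : y ∈ unitSqShadow a b) : dist x y ≤ |a| + |b| := by
  have h := Real.dist_le_of_mem_Icc hx hy
  rwa [add_sub_add_comm, max_sub_min_eq_abs, max_sub_min_eq_abs, zero_sub, zero_sub, abs_neg,
    abs_neg] at h

lemma orthProj_span_singleton_image (v : ℝ²) (A : Set ℝ²) :
    orthProj (ℝ ∙ v) '' A = (fun c : ℝ => (c / ‖v‖ ^ 2) • v) '' shadow A (v 0) (v 1) := by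
  rw [shadow, image_image]
  refine image_congr fun x _ => ?_
  change (ℝ ∙ v).starProjection x = _
  rw [Submodule.starProjection_singleton]
  simp [PiLp.inner_apply, Fin.sum_univ_two, mul_comm]

lemma orthProj_span_singleton_image_eq_iff {v : ℝ²} (hv : v ≠ 0) (A B : Set ℝ²) :
    orthProj (ℝ ∙ v) '' A = orthProj (ℝ ∙ v) '' B ↔
      shadow A (v 0) (v 1) = shadow B (v 0) (v 1) := by
  rw [orthProj_span_singleton_image, orthProj_span_singleton_image]
  refine image_eq_image fun c c' h => ?_
  have hv2 : ‖v‖ ^ 2 ≠ 0 := by positivity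
  simpa [hv2] using smul_left_injective ℝ hv h

lemma Submodule.exists_ne_zero_eq_span_singleton_of_finrank_eq_one {K V : Type*} [DivisionRing K]
    [AddCommGroup V] [Module K V] {W : Submodule K V} (hW : finrank K W = 1) :
    ∃ v : V, v ≠ 0 ∧ W = K ∙ v := by
  have : FiniteDimensional K W := Module.finite_of_finrank_eq_succ hW
  obtain ⟨w, hw⟩ : ∃ w : W, w ≠ 0 := (finrank_pos_iff_exists_ne_zero (R := K)).1 (by omega)
  have hw' : (w : V) ≠ 0 := by simpa using hw
  refine ⟨w, hw', (Submodule.eq_of_le_of_finrank_eq ?_ ?_).symm⟩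
  · exact (Submodule.span_singleton_le_iff_mem _ _).2 w.2
  · rw [finrank_span_singleton hw', hW]

lemma forall_orthProj_image_eq_iff_forall_shadow_eq (A B : Set ℝ²) :
    (∀ W : Submodule ℝ ℝ², finrank ℝ W = 1 → orthProj W '' A = orthProj W '' B) ↔
      ∀ v : ℝ², v ≠ 0 → shadow A (v 0) (v 1) = shadow B (v 0) (v 1) := by
  refine ⟨fun h v hv => ?_, fun h W hW => ?_⟩
  · exact (orthProj_span_singleton_image_eq_iff hv A B).1 (h _ (finrank_span_singleton hv))
  · obtain ⟨v, hv, rfl⟩ := Submodule.exists_ne_zero_eq_span_singleton_of_finrank_eq_one hW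
    exact (orthProj_span_singleton_image_eq_iff hv A B).2 (h v hv)

lemma half_one_sub_sqrt_le_iff {t s : ℝ} (ht : t < 1 / 2) (hs : 1 / 2 < s) :
    (1 - √(2 * s - 1)) / 2 ≤ t ↔ (1 - 2 * t) ^ 2 ≤ 2 * s - 1 := by
  rw [← Real.le_sqrt (by linarith) (by linarith)]
  constructor <;> intro h <;> linarith

lemma IsCompact.forall_mem_Icc_of_forall_exists_mem_Icc {X : Type*} [TopologicalSpace X]
    {K : Set X} (hK : IsCompact K) {f : X → ℝ} (hf : Continuous f)
    (h : ∀ p ∈ K, ∃ q ∈ K, ∃ c ∈ Ico (0 : ℝ) 1, f p ∈ Icc (c * f q) (c * f q + (1 - c))) :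
    ∀ p ∈ K, f p ∈ Icc 0 1 := by
  intro p hp
  obtain ⟨z, hzK, hz⟩ := hK.exists_isMaxOn ⟨p, hp⟩ hf.continuousOn
  obtain ⟨w, hwK, hw⟩ := hK.exists_isMinOn ⟨p, hp⟩ hf.continuousOn
  obtain ⟨q, hq, c, ⟨hc0, hc1⟩, -, hzq⟩ := h z hzK
  obtain ⟨q', hq', c', ⟨hc0', hc1'⟩, hwq, -⟩ := h w hwK
  have hz1 : f z ≤ 1 := by nlinarith [mul_le_mul_of_nonneg_left (hz hq) hc0]
  have hw0 : 0 ≤ f w := by nlinarith [mul_le_mul_of_nonneg_left (hw hq') hc0']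
  exact ⟨hw0.trans (hw hp), (hz hp).trans hz1⟩

lemma infDist_le_infDist_sub {E : Type*} [SeminormedAddCommGroup E] {A B : Set E} {d : E}
    (hB : B.Nonempty) (hBA : ∀ x ∈ B, x + d ∈ A) (c : E) :
    Metric.infDist c A ≤ Metric.infDist (c - d) B := by
  refine (Metric.le_infDist hB).2 fun y hy => ?_
  calc Metric.infDist c A ≤ dist c (y + d) := Metric.infDist_le_dist_of_mem (hBA y hy)
    _ = dist (c - d) y := by rw [dist_eq_norm, dist_eq_norm, sub_add_eq_sub_sub_swap]

lemma abs_mul_add_abs_mul_le {u v s : ℝ} (hu : 0 ≤ u) (hus : u ≤ s) (hv : 0 ≤ v) (hvs : v ≤ s)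
    (a b : ℝ) : |a * u| + |b * v| ≤ s * (|a| + |b|) := by
  rw [abs_mul, abs_mul, abs_of_nonneg hu, abs_of_nonneg hv, mul_add, mul_comm s, mul_comm s]
  gcongr

lemma mul_le_of_sq_le_of_mul_lt {κ σ x y : ℝ} (hκ : 0 < κ) (hκσ : κ ^ 2 ≤ σ) (hx : 0 ≤ x)
    (h : x * σ < y * κ) : x * κ ≤ y :=
  (lt_of_mul_lt_mul_right (by nlinarith [mul_le_mul_of_nonneg_left hκσ hx]) hκ.le).le

namespace MendivilTaylor

def hutchinson (t s : ℝ) (A : Set ℝ²) : Set ℝ² :=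
  ((fun p => mk2 (t * p 0) (s * p 1)) '' A) ∪
  ((fun p => mk2 (s * p 0) (t * p 1 + (1 - t))) '' A) ∪
  ((fun p => mk2 (s * p 0 + (1 - s)) (t * p 1)) '' A) ∪
  ((fun p => mk2 (t * p 0 + (1 - t)) (s * p 1 + (1 - s))) '' A)

/-- `PieceMem (shadow A) t s a b` is the `(a, b)`-shadow of `hutchinson t s A`, one disjunct per
map. -/
def PieceMem (F : ℝ → ℝ → Set ℝ) (t s a b c : ℝ) : Prop :=
  c ∈ F (a * t) (b * s) ∨ c - b * (1 - t) ∈ F (a * s) (b * t) ∨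
    c - a * (1 - s) ∈ F (a * s) (b * t) ∨ c - (a * (1 - t) + b * (1 - s)) ∈ F (a * t) (b * s)

variable {t s : ℝ}

lemma PieceMem.mono {F G : ℝ → ℝ → Set ℝ} (hFG : ∀ a b, F a b ⊆ G a b) {a b c : ℝ}
    (h : PieceMem F t s a b c) : PieceMem G t s a b c := by
  rcases h with h | h | h | h
  exacts [Or.inl (hFG _ _ h), Or.inr (Or.inl (hFG _ _ h)), Or.inr (Or.inr (Or.inl (hFG _ _ h))),
    Or.inr (Or.inr (Or.inr (hFG _ _ h)))]

lemma mem_shadow_hutchinson {A : Set ℝ²} {a b c : ℝ} :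
    c ∈ shadow (hutchinson t s A) a b ↔ PieceMem (shadow A) t s a b c := by
  simp only [hutchinson, shadow, image_union, image_image, mem_union, mem_image, PieceMem,
    mk2_apply_zero, mk2_apply_one, or_assoc]
  constructor
  · rintro (⟨p, hp, rfl⟩ | ⟨p, hp, rfl⟩ | ⟨p, hp, rfl⟩ | ⟨p, hp, rfl⟩)
    exacts [Or.inl ⟨p, hp, by ring⟩, Or.inr (Or.inl ⟨p, hp, by ring⟩),
      Or.inr (Or.inr (Or.inl ⟨p, hp, by ring⟩)), Or.inr (Or.inr (Or.inr ⟨p, hp, by ring⟩))]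
  · rintro (⟨p, hp, hc⟩ | ⟨p, hp, hc⟩ | ⟨p, hp, hc⟩ | ⟨p, hp, hc⟩)
    exacts [Or.inl ⟨p, hp, by linarith⟩, Or.inr (Or.inl ⟨p, hp, by linarith⟩),
      Or.inr (Or.inr (Or.inl ⟨p, hp, by linarith⟩)), Or.inr (Or.inr (Or.inr ⟨p, hp, by linarith⟩))]

lemma exists_mem_Icc_of_mem_hutchinson (ht0 : 0 ≤ t) (ht1 : t < 1) (hs0 : 0 ≤ s) (hs1 : s < 1)
    {A : Set ℝ²} {p : ℝ²} (hp : p ∈ hutchinson t s A) (i : Fin 2) :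
    ∃ q ∈ A, ∃ c ∈ Ico (0 : ℝ) 1, p i ∈ Icc (c * q i) (c * q i + (1 - c)) := by
  rcases hp with ((⟨q, hq, rfl⟩ | ⟨q, hq, rfl⟩) | ⟨q, hq, rfl⟩) | ⟨q, hq, rfl⟩ <;>
    refine ⟨q, hq, ?_⟩ <;> fin_cases i
  all_goals first
    | (refine ⟨t, ⟨ht0, ht1⟩, ?_, ?_⟩ <;> simp <;> linarith)
    | (refine ⟨s, ⟨hs0, hs1⟩, ?_, ?_⟩ <;> simp; linarith)

variable {K : Set ℝ²}

lemma mem_shadow_iff (hK : K = hutchinson t s K) {a b c : ℝ} :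
    c ∈ shadow K a b ↔ PieceMem (shadow K) t s a b c := by
  conv_lhs => rw [hK]
  exact mem_shadow_hutchinson

lemma subset_unitSq (ht0 : 0 ≤ t) (ht1 : t < 1) (hs0 : 0 ≤ s) (hs1 : s < 1)
    (hK : K = hutchinson t s K) (hKc : IsCompact K) : K ⊆ unitSq := fun p hp i =>
  hKc.forall_mem_Icc_of_forall_exists_mem_Icc (EuclideanSpace.proj i).continuous
    (fun _ hq => exists_mem_Icc_of_mem_hutchinson ht0 ht1 hs0 hs1 (hK.subset hq) i) p hp

lemma pieceMem_of_nonneg_of_nonneg (ht0 : 0 < t) (ht : t < 1 / 2) (hs : 1 / 2 < s)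
    (hcond : (1 - 2 * t) ^ 2 ≤ 2 * s - 1) {a b c : ℝ} (ha : 0 ≤ a) (hb : 0 ≤ b)
    (hc : c ∈ Icc 0 (a + b)) : PieceMem unitSqShadow t s a b c := by
  obtain ⟨hc0, hc1⟩ := hc
  rw [PieceMem, unitSqShadow_of_nonneg_of_nonneg (by positivity) (by positivity),
    unitSqShadow_of_nonneg_of_nonneg (by positivity) (by positivity)]
  rcases le_or_gt c (a * t + b * s) with h1 | h1
  · exact Or.inl ⟨hc0, h1⟩
  rcases le_or_gt (a * (1 - 2 * t)) (b * (2 * s - 1)) with hab | hab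
  · exact Or.inr (Or.inr (Or.inr ⟨by linarith, by linarith⟩))
  -- otherwise the pieces overlap consecutively in the order 1, 2, 3, 4
  have hba : b * (1 - 2 * t) ≤ a := mul_le_of_sq_le_of_mul_lt (by linarith) hcond hb hab
  have hbst : b * (1 - s - t) ≤ a * t := by
    nlinarith [mul_le_mul_of_nonneg_left hcond hb, mul_le_mul_of_nonneg_right hba ht0.le]
  rcases le_or_gt c (a * s + b) with h2 | h2
  · exact Or.inr (Or.inl ⟨by linarith, by linarith⟩)
  rcases le_or_gt c (a + b * t) with h3 | h3
  · exact Or.inr (Or.inr (Or.inl ⟨by nlinarith, by linarith⟩))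
  · exact Or.inr (Or.inr (Or.inr ⟨by linarith, by linarith⟩))

lemma pieceMem_of_nonneg_of_nonpos (ht0 : 0 < t) (ht : t < 1 / 2) (hs : 1 / 2 < s)
    (hst : s + t < 1) (hcond : (1 - 2 * t) ^ 2 ≤ 2 * s - 1) {a b c : ℝ} (ha : 0 ≤ a)
    (hb : b ≤ 0) (hc : c ∈ Icc b a) : PieceMem unitSqShadow t s a b c := by
  obtain ⟨hc0, hc1⟩ := hc
  rw [PieceMem, unitSqShadow_of_nonneg_of_nonpos (by positivity) (by nlinarith),
    unitSqShadow_of_nonneg_of_nonpos (by positivity) (by nlinarith)]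
  rcases le_or_gt c (a * s + b * (1 - t)) with h1 | h1
  · exact Or.inr (Or.inl ⟨by linarith, by linarith⟩)
  rcases le_or_gt (-b * (1 - 2 * t)) (a * (2 * s - 1)) with hab | hab
  · exact Or.inr (Or.inr (Or.inl ⟨by linarith, by linarith⟩))
  have hab' : a * (1 - 2 * t) ≤ -b := mul_le_of_sq_le_of_mul_lt (by linarith) hcond ha hab
  rcases le_or_gt (-b * (1 - s - t)) (a * s) with hbst | hbst
  · -- the pieces overlap consecutively in the order 2, 1, 4, 3
    rcases le_or_gt c (a * t) with h2 | h2
    · exact Or.inl ⟨by linarith, by linarith⟩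
    rcases le_or_gt c (a + b * (1 - s)) with h3 | h3
    · exact Or.inr (Or.inr (Or.inr ⟨by linarith, by linarith⟩))
    · exact Or.inr (Or.inr (Or.inl ⟨by linarith, by linarith⟩))
  · -- the pieces overlap consecutively in the order 2, 4, 1, 3
    have hsq : (1 - s - t) ^ 2 ≤ s * t := by nlinarith [sq_nonneg (1 - 2 * t)]
    have hast : a * (1 - s - t) ≤ -b * t := by
      nlinarith [mul_pos (by linarith : (0 : ℝ) < s) ht0]
    rcases le_or_gt c (a + b * (1 - s)) with h2 | h2
    · exact Or.inr (Or.inr (Or.inr ⟨by linarith, by linarith⟩))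
    rcases le_or_gt c (a * t) with h3 | h3
    · exact Or.inl ⟨by nlinarith, by linarith⟩
    · exact Or.inr (Or.inr (Or.inl ⟨by linarith, by linarith⟩))

lemma pieceMem_unitSqShadow (ht0 : 0 < t) (ht : t < 1 / 2) (hs : 1 / 2 < s) (hst : s + t < 1)
    (hcond : (1 - 2 * t) ^ 2 ≤ 2 * s - 1) {a b c : ℝ} (hc : c ∈ unitSqShadow a b) :
    PieceMem unitSqShadow t s a b c := by
  wlog ha : 0 ≤ a generalizing a b c
  · have h := this (neg_mem_unitSqShadow_neg.2 hc) (by linarith)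
    have neg_sub_neg_eq (x y : ℝ) : -x - -y = -(x - y) := by ring
    simpa only [PieceMem, neg_mul, ← neg_add, neg_sub_neg_eq, neg_mem_unitSqShadow_neg] using h
  rcases le_total 0 b with hb | hb
  · rw [unitSqShadow_of_nonneg_of_nonneg ha hb] at hc
    exact pieceMem_of_nonneg_of_nonneg ht0 ht hs hcond ha hb hc
  · rw [unitSqShadow_of_nonneg_of_nonpos ha hb] at hc
    exact pieceMem_of_nonneg_of_nonpos ht0 ht hs hst hcond ha hb hc

lemma infDist_shadow_le (ht0 : 0 < t) (ht : t < 1 / 2) (hs : 1 / 2 < s) (hst : s + t < 1)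
    (hcond : (1 - 2 * t) ^ 2 ≤ 2 * s - 1) (hK : K = hutchinson t s K) (hKne : K.Nonempty)
    (hKsq : K ⊆ unitSq) (n : ℕ) {a b c : ℝ} (hc : c ∈ unitSqShadow a b) :
    Metric.infDist c (shadow K a b) ≤ (|a| + |b|) * s ^ n := by
  induction n generalizing a b c with
  | zero =>
    obtain ⟨z, hz⟩ := hKne.image (fun p : ℝ² => a * p 0 + b * p 1)
    calc Metric.infDist c (shadow K a b) ≤ dist c z := Metric.infDist_le_dist_of_mem hz
      _ ≤ (|a| + |b|) * s ^ 0 := by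
        rw [pow_zero, mul_one]
        exact dist_le_of_mem_unitSqShadow hc (shadow_subset_unitSqShadow hKsq a b hz)
  | succ n ih =>
    have step {a' b' d : ℝ} (hab' : |a'| + |b'| ≤ s * (|a| + |b|))
        (hpiece : ∀ x ∈ shadow K a' b', x + d ∈ shadow K a b) (hcd : c - d ∈ unitSqShadow a' b') :
        Metric.infDist c (shadow K a b) ≤ (|a| + |b|) * s ^ (n + 1) :=
      calc Metric.infDist c (shadow K a b)
          ≤ Metric.infDist (c - d) (shadow K a' b') :=
            infDist_le_infDist_sub (hKne.image _) hpiece c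
        _ ≤ (|a'| + |b'|) * s ^ n := ih hcd
        _ ≤ s * (|a| + |b|) * s ^ n := by gcongr
        _ = (|a| + |b|) * s ^ (n + 1) := by ring
    have h14 : |a * t| + |b * s| ≤ s * (|a| + |b|) :=
      abs_mul_add_abs_mul_le ht0.le (by linarith) (by linarith) le_rfl a b
    have h23 : |a * s| + |b * t| ≤ s * (|a| + |b|) :=
      abs_mul_add_abs_mul_le (by linarith) le_rfl ht0.le (by linarith) a b
    rcases pieceMem_unitSqShadow ht0 ht hs hst hcond hc with h | h | h | h
    · exact step h14 (fun x hx => (mem_shadow_iff hK).2 (.inl (by rwa [add_zero])))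
        (by rwa [sub_zero])
    · exact step h23
        (fun x hx => (mem_shadow_iff hK).2 (.inr (.inl (by rwa [add_sub_cancel_right])))) h
    · exact step h23
        (fun x hx => (mem_shadow_iff hK).2 (.inr (.inr (.inl (by rwa [add_sub_cancel_right]))))) h
    · exact step h14
        (fun x hx => (mem_shadow_iff hK).2 (.inr (.inr (.inr (by rwa [add_sub_cancel_right]))))) h

lemma shadow_eq_unitSqShadow (ht0 : 0 < t) (ht : t < 1 / 2) (hs : 1 / 2 < s) (hs1 : s < 1)
    (hst : s + t < 1) (hcond : (1 - 2 * t) ^ 2 ≤ 2 * s - 1) (hK : K = hutchinson t s K)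
    (hKne : K.Nonempty) (hKc : IsCompact K) (a b : ℝ) : shadow K a b = unitSqShadow a b := by
  have hKsq := subset_unitSq ht0.le (by linarith) (by linarith) hs1 hK hKc
  refine subset_antisymm (shadow_subset_unitSqShadow hKsq a b) fun c hc => ?_
  have hlim : Filter.Tendsto (fun n : ℕ => (|a| + |b|) * s ^ n) Filter.atTop (nhds 0) := by
    simpa using (tendsto_pow_atTop_nhds_zero_of_lt_one (by linarith) hs1).const_mul (|a| + |b|)
  refine ((hKc.shadow a b).isClosed.mem_iff_infDist_zero (hKne.image _)).2 ?_
  exact le_antisymm (ge_of_tendsto' hlim fun n =>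
    infDist_shadow_le ht0 ht hs hst hcond hK hKne hKsq n hc) Metric.infDist_nonneg

lemma exists_gap (ht0 : 0 < t) (ht : t < 1 / 2) (hs : 1 / 2 < s)
    (hcond : 2 * s - 1 < (1 - 2 * t) ^ 2) :
    ∃ r z : ℝ, z ∈ unitSqShadow r (-1) ∧ ¬ PieceMem unitSqShadow t s r (-1) z := by
  have hκ : 0 < 1 - 2 * t := by linarith
  have hσ : 0 < 2 * s - 1 := by linarith
  -- any `r` with `1 / (1 - 2t) < r < (1 - 2t) / (2s - 1)` opens a gap between the pieces
  obtain ⟨r, hr1, hr2⟩ : ∃ r, 1 / (1 - 2 * t) < r ∧ r < (1 - 2 * t) / (2 * s - 1) :=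
    exists_between (by rw [div_lt_div_iff₀ hκ hσ]; linarith)
  rw [div_lt_iff₀' hκ] at hr1
  rw [lt_div_iff₀ hσ] at hr2
  have hr0 : 0 < r := by nlinarith
  obtain ⟨z, hzL, hzU⟩ := exists_between (a₁ := max (r * t) (r * s - (1 - t)))
    (a₂ := min (r * (1 - s) - t) (r * (1 - t) - 1))
    (max_lt (lt_min (by nlinarith) (by nlinarith)) (lt_min (by nlinarith) (by nlinarith)))
  rw [max_lt_iff] at hzL
  rw [lt_min_iff] at hzU
  refine ⟨r, z, ?_, ?_⟩
  · rw [unitSqShadow_of_nonneg_of_nonpos hr0.le (by norm_num)]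
    constructor <;> nlinarith
  rw [PieceMem, unitSqShadow_of_nonneg_of_nonpos (a := r * t) (by positivity) (by linarith),
    unitSqShadow_of_nonneg_of_nonpos (a := r * s) (by positivity) (by linarith)]
  rintro (⟨-, h⟩ | ⟨-, h⟩ | ⟨h, -⟩ | ⟨h, -⟩) <;> linarith

lemma exists_shadow_ne (ht0 : 0 < t) (ht : t < 1 / 2) (hs : 1 / 2 < s) (hs1 : s < 1)
    (hcond : 2 * s - 1 < (1 - 2 * t) ^ 2) (hK : K = hutchinson t s K) (hKc : IsCompact K) :
    ∃ r : ℝ, shadow K r (-1) ≠ shadow unitSq r (-1) := by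
  obtain ⟨r, z, hz, hgap⟩ := exists_gap ht0 ht hs hcond
  refine ⟨r, fun h => hgap ?_⟩
  have hKsq := subset_unitSq ht0.le (by linarith) (by linarith) hs1 hK hKc
  rw [← shadow_unitSq, ← h, mem_shadow_iff hK] at hz
  exact hz.mono (shadow_subset_unitSqShadow hKsq)

end MendivilTaylor

/-- The Mendivil–Taylor self-affine set has very thick shadows in all directions iff
`(1 - √(2s-1))/2 ≤ t`. -/
theorem mendivilTaylor_veryThickShadows_iff
    (t s : ℝ) (ht0 : 0 < t) (ht : t < 1 / 2) (hs : 1 / 2 < s) (hs1 : s < 1)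
    (hst : s + t < 1)
    (K : Set (EuclideanSpace ℝ (Fin 2))) (hKne : K.Nonempty) (hKcpt : IsCompact K)
    (hKattr : K =
      ((fun p => mk2 (t * p 0) (s * p 1)) '' K) ∪
      ((fun p => mk2 (s * p 0) (t * p 1 + (1 - t))) '' K) ∪
      ((fun p => mk2 (s * p 0 + (1 - s)) (t * p 1)) '' K) ∪
      ((fun p => mk2 (t * p 0 + (1 - t)) (s * p 1 + (1 - s))) '' K)) :
    (∀ (W : Submodule ℝ (EuclideanSpace ℝ (Fin 2))), finrank ℝ W = 1 →
      orthProj W '' K = orthProj W '' unitSq) ↔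
    (1 - Real.sqrt (2 * s - 1)) / 2 ≤ t := by
  have hK : K = MendivilTaylor.hutchinson t s K := hKattr
  rw [forall_orthProj_image_eq_iff_forall_shadow_eq, half_one_sub_sqrt_le_iff ht hs]
  refine ⟨fun h => ?_, fun hcond v _ => ?_⟩
  · by_contra! hcond
    obtain ⟨r, hr⟩ := MendivilTaylor.exists_shadow_ne ht0 ht hs hs1 hcond hK hKcpt
    exact hr (by simpa using h (mk2 r (-1)) (mk2_ne_zero_of_right (by norm_num)))
  · rw [MendivilTaylor.shadow_eq_unitSqShadow ht0 ht hs hs1 hst hcond hK hKne hKcpt,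
      shadow_unitSq]
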